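/- For all finite sets u, v, w, w₁ of bimodal formulas, if w ∈ CCS(u ∪ w₁) and w₁ ∈ CCS(v), then w ∈ CCS(u ∪ v). -/
import Mathlib


/-- Bimodal formulas over a countable set of atoms. -/
inductive Fm : Type
  | atom : ℕ → Fm
  | bot  : Fm
  | neg  : Fm → Fm
  | conj : Fm → Fm → Fm
  | boxa : Fm → Fm
  | boxb : Fm → Fm
deriving DecidableEq

open Fm

/-- Modal degree (maximal nesting depth of the modal operators). -/
def deg : Fm → ℕ
  | .atom _ => 0
  | .bot => 0
  | .neg φ => deg φ
  | .conj φ ψ => max (deg φ) (deg ψ)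
  | .boxa φ => deg φ + 1
  | .boxb φ => deg φ + 1

/-- Degree of a finite set of formulas (0 for the empty set). -/
def degS (w : Finset Fm) : ℕ := w.sup deg

/-- `CSF w`: least set of formulas containing `w` and closed under the
classical saturation rules. -/
inductive CSF (w : Finset Fm) : Fm → Prop
  | base {φ} : φ ∈ w → CSF w φ
  | andl {φ ψ} : CSF w (conj φ ψ) → CSF w φ
  | andr {φ ψ} : CSF w (conj φ ψ) → CSF w ψ
  | nandl {φ ψ} : CSF w (neg (conj φ ψ)) → CSF w (neg φ)
  | nandr {φ ψ} : CSF w (neg (conj φ ψ)) → CSF w (neg ψ)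
  | negE {φ} : CSF w (neg φ) → CSF w φ

/-- `CCS u`: the set of consistent classical saturations of `u`. -/
def CCS (u : Finset Fm) : Set (Finset Fm) :=
  { w | u ⊆ w ∧ (∀ φ ∈ w, CSF u φ) ∧
    (∀ φ ψ : Fm, conj φ ψ ∈ w → φ ∈ w ∧ ψ ∈ w) ∧
    (∀ φ ψ : Fm, neg (conj φ ψ) ∈ w → neg φ ∈ w ∨ neg ψ ∈ w) ∧
    (∀ φ : Fm, neg (neg φ) ∈ w → φ ∈ w) ∧
    bot ∉ w ∧
    (∀ φ : Fm, neg φ ∈ w → φ ∉ w) }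

/-- Plain unboxing `□ₐ⁻(w) = {φ : □ₐφ ∈ w}`. -/
def unboxa (w : Finset Fm) : Finset Fm :=
  w.biUnion (fun φ => match φ with | .boxa ψ => {ψ} | _ => ∅)

/-- Plain unboxing `□_b⁻(w) = {φ : □_bφ ∈ w}`. -/
def unboxb (w : Finset Fm) : Finset Fm :=
  w.biUnion (fun φ => match φ with | .boxb ψ => {ψ} | _ => ∅)

/-- Transitive unboxing `□ₐ⁻⁴(w) = {φ, □ₐφ : □ₐφ ∈ w}`. -/
def unboxa4 (w : Finset Fm) : Finset Fm :=
  w.biUnion (fun φ => match φ with | .boxa ψ => {ψ, .boxa ψ} | _ => ∅)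

/-- Transitive unboxing `□_b⁻⁴(w) = {φ, □_bφ : □_bφ ∈ w}`. -/
def unboxb4 (w : Finset Fm) : Finset Fm :=
  w.biUnion (fun φ => match φ with | .boxb ψ => {ψ, .boxb ψ} | _ => ∅)

/-- Standard Kripke satisfaction in a bimodal model `(W, Ra, Rb, V)`. -/
def Sat {W : Type} (Ra Rb : W → W → Prop) (V : ℕ → W → Prop) : W → Fm → Prop
  | x, .atom p => V p x
  | _, .bot => False
  | x, .neg φ => ¬ Sat Ra Rb V x φ
  | x, .conj φ ψ => Sat Ra Rb V x φ ∧ Sat Ra Rb V x ψ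
  | x, .boxa φ => ∀ y, Ra x y → Sat Ra Rb V y φ
  | x, .boxb φ => ∀ y, Rb x y → Sat Ra Rb V y φ

/-- `(ws 0, …, ws k)` is a `k`-window for `w`. -/
def IsWindow (w : Finset Fm) (k : ℕ) (ws : ℕ → Finset Fm) : Prop :=
  ws k ∈ CCS (unboxa w) ∧ ∀ i < k, ws i ∈ CCS (unboxa w ∪ unboxb (ws (i + 1)))

lemma CSF_trans {s t : Finset Fm} (h : ∀ φ ∈ s, CSF t φ) :
    ∀ {ψ}, CSF s ψ → CSF t ψ := by
  intro ψ hψ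
  induction hψ with
  | base hm => exact h _ hm
  | andl _ ih => exact CSF.andl ih
  | andr _ ih => exact CSF.andr ih
  | nandl _ ih => exact CSF.nandl ih
  | nandr _ ih => exact CSF.nandr ih
  | negE _ ih => exact CSF.negE ih

/-- if `w ∈ CCS(u ∪ w₁)` and `w₁ ∈ CCS(v)` then `w ∈ CCS(u ∪ v)`. -/
theorem stmt0 (u v w w₁ : Finset Fm)
    (hw : w ∈ CCS (u ∪ w₁)) (hw₁ : w₁ ∈ CCS v) :
    w ∈ CCS (u ∪ v) := by
  obtain ⟨hsub, hcsf, rest⟩ := hw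
  obtain ⟨hsub₁, hcsf₁, _⟩ := hw₁
  refine ⟨?_, ?_, rest⟩
  · exact Finset.union_subset (Finset.union_subset_left hsub)
      (hsub₁.trans ((Finset.subset_union_right).trans hsub))
  · intro φ hφ
    refine CSF_trans ?_ (hcsf φ hφ)
    intro ψ hψ
    rcases Finset.mem_union.mp hψ with h | h
    · exact CSF.base (Finset.mem_union_left _ h)
    · exact CSF_trans (fun χ hχ => CSF.base (Finset.mem_union_right _ hχ)) (hcsf₁ ψ h)
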